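/- Let ε ∈ (0,ε₀) with ε₀ sufficiently small. Then for each m ∈ {1,2,3} there exist δ₀ > 0 and C > 0 (which may depend on ε) such that for all ξ with 0 < |ξ| < δ₀: |M_m(ξ) − sgn(ξ) ξ^{m−1}| ≤ C |ξ|^m. In particular M₁ has the one-sided limit values M₁(0±) = ±1, and M₂, M₃ extend continuously to ξ = 0 with M₂(0) = M₃(0) = 0. -/

import Mathlib

noncomputable section
open Set Filter

namespace Stmt16

/-- D(ξ) = √(1 + 2ε²ξ² − 4ε⁴ξ² − 3ε⁴ξ⁴) (real positive square root) -/
def Dsmall (ε ξ : ℝ) : ℝ := Real.sqrt (1 + 2*ε^2*ξ^2 - 4*ε^4*ξ^2 - 3*ε^4*ξ^4)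

/-- M_m(ξ) = ξ^m √(1 + ε²ξ² − D(ξ)) /
    ( √2 ε² ξ² (1+ξ²) + (√2/2)|ξ|√(1+ξ²)(1 + ε²ξ² − D(ξ)) ) -/
def Mfun (ε : ℝ) (m : ℕ) (ξ : ℝ) : ℝ :=
  ξ^m * Real.sqrt (1 + ε^2*ξ^2 - Dsmall ε ξ) /
    (Real.sqrt 2 * ε^2 * ξ^2 * (1 + ξ^2)
      + Real.sqrt 2 / 2 * |ξ| * Real.sqrt (1 + ξ^2) * (1 + ε^2*ξ^2 - Dsmall ε ξ))

set_option maxHeartbeats 800000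

lemma Dbounds (ε ξ : ℝ) (he2' : 0 < ε^2) (he2 : ε^2 < 1/4) (hx2' : 0 < ξ^2) (hx2 : ξ^2 < 1/4) :
    1/2 ≤ Dsmall ε ξ ∧ Dsmall ε ξ ≤ 9/8 ∧ 1 - ξ^2 ≤ Dsmall ε ξ ∧ Dsmall ε ξ ≤ 1 + ξ^2 ∧
    Dsmall ε ξ ≤ 1 + ε^2*ξ^2 ∧
    (Dsmall ε ξ)^2 = 1 + 2*ε^2*ξ^2 - 4*ε^4*ξ^2 - 3*ε^4*ξ^4 := by
  have he4 : ε^4 ≤ 1/16 := by nlinarith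
  have ha : 4*ε^4*ξ^2 ≤ ξ^2/4 := by nlinarith [mul_nonneg (by nlinarith : (0:ℝ) ≤ 1/16 - ε^4) hx2'.le]
  have hb : 3*ε^4*ξ^4 ≤ ξ^4 := by
    nlinarith [mul_nonneg (by nlinarith : (0:ℝ) ≤ 1 - 3*ε^4) (by positivity : (0:ℝ) ≤ ξ^4)]
  have hc : (0:ℝ) ≤ 2*ε^2*ξ^2 := by positivity
  have hc' : 2*ε^2*ξ^2 ≤ ξ^2/2 := by
    nlinarith [mul_nonneg (by nlinarith : (0:ℝ) ≤ 1/2 - 2*ε^2) hx2'.le]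
  have hd : ξ^4 ≤ ξ^2/4 := by nlinarith
  have hP0 : (1:ℝ)/2 ≤ 1 + 2*ε^2*ξ^2 - 4*ε^4*ξ^2 - 3*ε^4*ξ^4 := by nlinarith
  have hDsq : (Dsmall ε ξ)^2 = 1 + 2*ε^2*ξ^2 - 4*ε^4*ξ^2 - 3*ε^4*ξ^4 :=
    Real.sq_sqrt (by linarith)
  have hD0 : 0 < Dsmall ε ξ := Real.sqrt_pos.mpr (by linarith)
  have hP1 : 1 + 2*ε^2*ξ^2 - 4*ε^4*ξ^2 - 3*ε^4*ξ^4 ≤ 1 + ξ^2 := by nlinarith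
  have hPl : (1-ξ^2)^2 ≤ 1 + 2*ε^2*ξ^2 - 4*ε^4*ξ^2 - 3*ε^4*ξ^4 := by nlinarith
  refine ⟨by nlinarith, by nlinarith, by nlinarith, by nlinarith [mul_nonneg hx2'.le hx2'.le],
    by nlinarith [sq_nonneg (ε^2*ξ), sq_nonneg (ε^2*ξ^2), mul_pos he2' hx2'], hDsq⟩

lemma key (ε ξ : ℝ) (hε0 : 0 < ε) (hε1 : ε < 1/2) (hx0 : 0 < |ξ|) (hx1 : |ξ| < 1/2)
    (m : ℕ) (hm : 1 ≤ m) :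
    |Mfun ε m ξ - Real.sign ξ * ξ^(m-1)| ≤ 30 * |ξ|^m := by
  have hξne : ξ ≠ 0 := abs_pos.mp hx0
  have hx2 : ξ^2 < 1/4 := by nlinarith only [sq_abs ξ, abs_nonneg ξ, hx1, hx0]
  have hx2' : (0:ℝ) < ξ^2 := by positivity
  have he2 : ε^2 < 1/4 := by nlinarith only [hε0, hε1]
  have he2' : (0:ℝ) < ε^2 := by positivity
  have hex : ε^2*ξ^2 < 1/16 := by
    have := mul_lt_mul'' he2 hx2 he2'.le hx2'.le
    linarith
  have hex' : (0:ℝ) < ε^2*ξ^2 := by positivity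
  have hxx : ξ^2 ≤ |ξ|/2 := by nlinarith only [sq_abs ξ, hx1, hx0]
  obtain ⟨hDlb, hDub, hD1lb, hD1ub, hDA, hDsq⟩ := Dbounds ε ξ he2' he2 hx2' hx2
  set D : ℝ := Dsmall ε ξ with hDdef
  have hD0 : (0:ℝ) < D := by linarith
  -- t = sqrt(1+ξ²)
  set t : ℝ := Real.sqrt (1 + ξ^2) with htdef
  have ht2 : t^2 = 1 + ξ^2 := Real.sq_sqrt (by positivity)
  have ht0 : 0 < t := Real.sqrt_pos.mpr (by positivity)
  have ht1 : 1 ≤ t := by nlinarith only [ht2, ht0, hx2']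
  have htub : t ≤ 5/4 := by nlinarith only [ht2, hx2, sq_nonneg (t - 5/4)]
  have htb : t ≤ 1 + ξ^2 := by nlinarith only [ht2, ht0, hx2', sq_nonneg (t - 1 - ξ^2)]
  -- s = sqrt(1+ε²ξ²+D)
  set s : ℝ := Real.sqrt (1 + ε^2*ξ^2 + D) with hsdef
  have hs2 : s^2 = 1 + ε^2*ξ^2 + D := Real.sq_sqrt (by nlinarith only [hD0, hex'])
  have hs0 : 0 < s := Real.sqrt_pos.mpr (by nlinarith only [hD0, hex'])
  have hs1 : 1 ≤ s := by nlinarith only [hs2, hs0, hDlb, hex']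
  have hsub : s ≤ 8/5 := by nlinarith only [hs2, hDub, hex, sq_nonneg (s - 8/5)]
  -- r = sqrt 2
  set r : ℝ := Real.sqrt 2 with hrdef
  have hr2 : r^2 = 2 := Real.sq_sqrt (by norm_num)
  have hr0 : 0 < r := Real.sqrt_pos.mpr (by norm_num)
  have hr1 : 1 ≤ r := by nlinarith only [hr2, hr0]
  have hrub : r ≤ 3/2 := by nlinarith only [hr2, hr0, sq_nonneg (r - 3/2)]
  -- B
  set B : ℝ := 2*ε^2 * |ξ| * t with hBdef
  have hB0 : 0 < B := by rw [hBdef]; positivity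
  have hBub : B ≤ 5/8 * |ξ| := by
    have h1 : 2*ε^2*t ≤ 5/8 := by
      nlinarith only [mul_nonneg (by linarith : (0:ℝ) ≤ 1/4 - ε^2) ht0.le, htub, ht0, he2, he2']
    nlinarith only [mul_le_mul_of_nonneg_right h1 (abs_nonneg ξ), hBdef]
  clear_value D t s r B
  -- A = 1+ε²ξ²-D and the identity A s² = B²
  have hAs : (1 + ε^2*ξ^2 - D) * s^2 = B^2 := by
    rw [hs2, hBdef]
    linear_combination -hDsq - 4*ε^4*t^2 * sq_abs ξ - 4*ε^4*ξ^2 * ht2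
  have hA0 : 0 ≤ 1 + ε^2*ξ^2 - D := by linarith
  have hsqrtA : Real.sqrt (1 + ε^2*ξ^2 - D) = B/s := by
    have h : 1 + ε^2*ξ^2 - D = (B/s)^2 := by
      field_simp
      linear_combination hAs
    rw [h, Real.sqrt_sq (div_nonneg hB0.le hs0.le)]
  have hAval : 1 + ε^2*ξ^2 - D = B^2/s^2 := by
    field_simp [hs0.ne']
    linear_combination hAs
  -- rewrite Mfun
  have hden : r*ε^2*ξ^2*(1+ξ^2) = r/2 * |ξ| * t*B := by
    rw [hBdef]
    linear_combination -(r*ε^2*t^2) * sq_abs ξ - (r*ε^2*ξ^2) * ht2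
  have hsB : 0 < s^2 + B := by nlinarith only [hB0, sq_nonneg s]
  have hQpos : 0 < r*t*(s^2+B) := mul_pos (mul_pos hr0 ht0) hsB
  have hM : Mfun ε m ξ = ξ^m * (2*s) / (|ξ| * (r*t*(s^2+B))) := by
    unfold Mfun
    rw [← hDdef, ← htdef, ← hrdef, hsqrtA, hAval, hden]
    have hd1 : 0 < r/2 * |ξ| * t*B + r/2 * |ξ| * t*(B^2/s^2) := by
      have h2 : 0 < B^2/s^2 := div_pos (pow_pos hB0 2) (pow_pos hs0 2)
      have h3 : 0 < r/2 * |ξ| * t := mul_pos (mul_pos (by linarith) hx0) ht0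
      nlinarith only [mul_pos h3 hB0, mul_pos h3 h2]
    rw [div_eq_div_iff hd1.ne' (mul_pos hx0 hQpos).ne']
    field_simp [hs0.ne']
  -- target
  have hT : Real.sign ξ * ξ^(m-1) = ξ^m / |ξ| := by
    have hm' : m - 1 + 1 = m := by omega
    rcases lt_or_gt_of_ne hξne with h | h
    · rw [Real.sign_of_neg h, abs_of_neg h, ← hm', pow_succ]
      field_simp
      rw [Nat.add_sub_cancel]
    · rw [Real.sign_of_pos h, abs_of_pos h, ← hm', pow_succ]
      field_simp
      rw [Nat.add_sub_cancel]
  -- the error formula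
  have herr : Mfun ε m ξ - Real.sign ξ * ξ^(m-1)
      = (ξ^m/|ξ|) * ((2*s - r*t*(s^2+B)) / (r*t*(s^2+B))) := by
    rw [hM, hT]
    field_simp [hx0.ne', hQpos.ne']
  clear hAs hAval hsqrtA hden hM hT
  -- bound on N
  have hsr : |s - r| ≤ ξ^2 := by
    rw [abs_le]
    constructor
    · nlinarith only [hs2, hr2, hD1lb, hD1ub, hex', hx2', hs1, hr1,
        mul_nonneg (by linarith : (0:ℝ) ≤ 1/4 - ε^2) hx2'.le]
    · nlinarith only [hs2, hr2, hD1lb, hD1ub, hex', hx2', hs1, hr1,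
        mul_nonneg (by linarith : (0:ℝ) ≤ 1/4 - ε^2) hx2'.le]
  have hN : |2*s - r*t*(s^2+B)| ≤ 6 * |ξ| := by
    have e : 2*s - r*t*(s^2+B) = r*s*(r-s) + r*s^2*(1-t) - r*t*B := by
      rw [show (2:ℝ) = r^2 from hr2.symm]; ring
    have hsr' := abs_le.mp hsr
    have hrs : r*s ≤ 12/5 := by nlinarith only [hrub, hsub, hr1, hs1]
    have hrs2 : r*s^2 ≤ 4 := by nlinarith only [hs2, hDub, hrub, hr1, hex]
    have hrt : r*t ≤ 15/8 := by nlinarith only [hrub, htub, hr1, ht1]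
    have hrtB : r*t*B ≤ 2 * |ξ| := by
      nlinarith only [hrt, hBub, hB0, abs_nonneg ξ, mul_pos hr0 ht0]
    rw [e, abs_le]
    constructor
    · nlinarith only [mul_nonneg (mul_nonneg hr0.le hs0.le) (by linarith : 0 ≤ ξ^2 + (r - s)),
        mul_nonneg (mul_nonneg hr0.le (sq_nonneg s)) (by linarith : 0 ≤ (1 - t) + ξ^2),
        mul_nonneg (sq_nonneg ξ) (by linarith : 0 ≤ 12/5 - r*s),
        mul_nonneg (sq_nonneg ξ) (by linarith : 0 ≤ 4 - r*s^2),
        hrtB, hxx, abs_nonneg ξ]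
    · nlinarith only [mul_nonneg (mul_nonneg hr0.le hs0.le) (by linarith : 0 ≤ ξ^2 - (r - s)),
        mul_nonneg (mul_nonneg hr0.le (sq_nonneg s)) (by linarith : 0 ≤ t - 1),
        mul_nonneg (mul_nonneg hr0.le ht0.le) hB0.le,
        mul_nonneg (sq_nonneg ξ) (by linarith : 0 ≤ 12/5 - r*s),
        hxx, abs_nonneg ξ]
  have hrt1 : 1 ≤ r*t := by nlinarith only [hr1, ht1]
  have hsB1 : 1 ≤ s^2 + B := by nlinarith only [hs1, hs0, hB0]
  have hQ1 : 1 ≤ r*t*(s^2+B) := by nlinarith only [hrt1, hsB1]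
  calc |Mfun ε m ξ - Real.sign ξ * ξ^(m-1)|
      = |ξ|^m/|ξ| * (|2*s - r*t*(s^2+B)| / (r*t*(s^2+B))) := by
        rw [herr, abs_mul, abs_div, abs_div, abs_pow, abs_abs, abs_of_pos hQpos]
    _ ≤ |ξ|^m/|ξ| * (6 * |ξ|/1) := by
        apply mul_le_mul_of_nonneg_left _ (by positivity)
        exact div_le_div₀ (by positivity) hN one_pos hQ1
    _ = 6 * |ξ|^m := by
        rw [div_one]
        field_simp [hx0.ne']
    _ ≤ 30 * |ξ|^m := by nlinarith only [pow_nonneg (abs_nonneg ξ) m]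


lemma squeeze_aux {f : ℝ → ℝ} {l : Filter ℝ} {a c : ℝ} (n : ℕ) (hn : 1 ≤ n)
    (h : ∀ᶠ ξ in l, |f ξ - a| ≤ c * |ξ|^n) (hl : l ≤ nhds 0) : Tendsto f l (nhds a) := by
  rw [tendsto_iff_dist_tendsto_zero]
  apply squeeze_zero' (Eventually.of_forall fun t => dist_nonneg)
    (by simpa [Real.dist_eq] using h)
  have hc : Tendsto (fun ξ : ℝ => c * |ξ|^n) (nhds 0) (nhds (c * |(0:ℝ)|^n)) :=
    Continuous.tendsto (by continuity) 0
  have h0 : c * |(0:ℝ)|^n = 0 := by simp [zero_pow (by omega : n ≠ 0)]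
  rw [h0] at hc
  exact hc.mono_left hl

lemma sign_abs_le (ξ : ℝ) : |Real.sign ξ| ≤ 1 := by
  rcases lt_trichotomy ξ 0 with h | h | h
  · simp [Real.sign_of_neg h]
  · simp [h]
  · simp [Real.sign_of_pos h]

theorem Mfun_asymptotics_at_zero :
    ∃ ε₀ ∈ Ioo (0:ℝ) 1, ∀ ε ∈ Ioo (0:ℝ) ε₀,
      (∀ m ∈ ({1, 2, 3} : Set ℕ), ∃ δ₀ > (0:ℝ), ∃ C > (0:ℝ),
        ∀ ξ : ℝ, 0 < |ξ| → |ξ| < δ₀ →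
          |Mfun ε m ξ - Real.sign ξ * ξ^(m-1)| ≤ C * |ξ|^m) ∧
      -- in particular M₁ has one-sided limits ±1 at 0, and M₂, M₃ extend by 0
      Tendsto (Mfun ε 1) (nhdsWithin 0 (Ioi 0)) (nhds 1) ∧
      Tendsto (Mfun ε 1) (nhdsWithin 0 (Iio 0)) (nhds (-1)) ∧
      Tendsto (Mfun ε 2) (nhdsWithin 0 {(0:ℝ)}ᶜ) (nhds 0) ∧
      Tendsto (Mfun ε 3) (nhdsWithin 0 {(0:ℝ)}ᶜ) (nhds 0) := by
  refine ⟨1/2, by norm_num, ?_⟩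
  intro ε hε
  obtain ⟨hε0, hε1⟩ := hε
  have hkey : ∀ m : ℕ, 1 ≤ m → ∀ ξ : ℝ, 0 < |ξ| → |ξ| < 1/2 →
      |Mfun ε m ξ - Real.sign ξ * ξ^(m-1)| ≤ 30 * |ξ|^m :=
    fun m hm ξ h1 h2 => key ε ξ hε0 hε1 h1 h2 m hm
  have hb : {ξ : ℝ | |ξ| < 1/2} ∈ nhds (0:ℝ) := by
    have := Metric.ball_mem_nhds (0:ℝ) (by norm_num : (0:ℝ) < 1/2)
    simpa [Metric.ball, Real.dist_eq] using this
  -- uniform bound for punctured-neighborhood limits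
  have hzero : ∀ m : ℕ, 2 ≤ m →
      Tendsto (Mfun ε m) (nhdsWithin 0 {(0:ℝ)}ᶜ) (nhds 0) := by
    intro m hm2
    refine squeeze_aux (c := 31) (m-1) (by omega) ?_ nhdsWithin_le_nhds
    filter_upwards [mem_nhdsWithin_of_mem_nhds hb, self_mem_nhdsWithin] with ξ hξ hξ0
    have hξne : ξ ≠ 0 := hξ0
    have h1 : 0 < |ξ| := abs_pos.mpr hξne
    have hξ' : |ξ| < 1/2 := hξ
    have hk := hkey m (by omega) ξ h1 hξ'
    have hT : |Real.sign ξ * ξ^(m-1)| ≤ |ξ|^(m-1) := by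
      rw [abs_mul, abs_pow]
      calc |Real.sign ξ| * |ξ|^(m-1) ≤ 1 * |ξ|^(m-1) :=
            mul_le_mul_of_nonneg_right (sign_abs_le ξ) (by positivity)
        _ = |ξ|^(m-1) := one_mul _
    have hpow : |ξ|^m ≤ |ξ|^(m-1) := by
      apply pow_le_pow_of_le_one (abs_nonneg ξ) (by linarith) (by omega)
    calc |Mfun ε m ξ - 0| = |Mfun ε m ξ| := by rw [sub_zero]
      _ ≤ |Mfun ε m ξ - Real.sign ξ * ξ^(m-1)| + |Real.sign ξ * ξ^(m-1)| := by
          have := abs_sub_abs_le_abs_sub (Mfun ε m ξ) (Real.sign ξ * ξ^(m-1))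
          have h := abs_add_le (Mfun ε m ξ - Real.sign ξ * ξ^(m-1)) (Real.sign ξ * ξ^(m-1))
          simpa using h
      _ ≤ 30 * |ξ|^m + |ξ|^(m-1) := add_le_add hk hT
      _ ≤ 31 * |ξ|^(m-1) := by nlinarith only [hpow, pow_nonneg (abs_nonneg ξ) (m-1)]
  refine ⟨?_, ?_, ?_, hzero 2 le_rfl, hzero 3 (by norm_num)⟩
  · intro m hm
    have hm1 : 1 ≤ m := by
      simp only [Set.mem_insert_iff, Set.mem_singleton_iff] at hm
      omega
    exact ⟨1/2, by norm_num, 30, by norm_num, fun ξ h1 h2 => hkey m hm1 ξ h1 h2⟩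
  · -- right limit of M₁
    refine squeeze_aux (c := 30) 1 le_rfl ?_ nhdsWithin_le_nhds
    filter_upwards [Ioo_mem_nhdsGT_of_mem (by norm_num : (0:ℝ) ∈ Ico (0:ℝ) (1/2))]
      with ξ hξ
    have h1 : 0 < |ξ| := abs_pos.mpr (ne_of_gt hξ.1)
    have h2 : |ξ| < 1/2 := by rw [abs_of_pos hξ.1]; exact hξ.2
    have := hkey 1 le_rfl ξ h1 h2
    simpa [Real.sign_of_pos hξ.1] using this
  · -- left limit of M₁
    refine squeeze_aux (c := 30) 1 le_rfl ?_ nhdsWithin_le_nhds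
    filter_upwards [Ioo_mem_nhdsLT_of_mem (by norm_num : (0:ℝ) ∈ Ioc (-(1/2)) 0)]
      with ξ hξ
    have h1 : 0 < |ξ| := abs_pos.mpr (ne_of_lt hξ.2)
    have h2 : |ξ| < 1/2 := by rw [abs_of_neg hξ.2]; linarith [hξ.1]
    have := hkey 1 le_rfl ξ h1 h2
    simpa [Real.sign_of_neg hξ.2] using this


end Stmt16
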